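/- Let G be a finite simple graph on vertex set [n] and I_G = (x_i x_j : {i,j} an edge of G) its edge ideal in k[x_1,…,x_n]. Fix a vertex i. There exists a polarization of I_G in which the variable x_i is polarized into two variables x_i and x_{i′} (each appearing in some generator) and every other variable is unsplit, if and only if there is a partition of the neighborhood N_G(i) into two nonempty sets A and B such that every a ∈ A and b ∈ B are adjacent in G (i.e., G restricted to N_G(i) contains a complete bipartite graph on all its vertices). Moreover, every such bipartition N_G(i) = A ∪ B yields a polarization, namely the ideal generated by x_i x_a for a ∈ A, x_{i′} x_b for b ∈ B, and x_u x_v for all edges {u,v} of G with i ∉ {u,v}. -/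

import Mathlib

set_option linter.unusedSectionVars false

open MvPolynomial

/-- A squarefree monomial ideal: an ideal generated by squarefree monomials. -/
def IsSqFreeMonomialIdeal {k : Type*} [Field k] {V : Type*}
    (I : Ideal (MvPolynomial V k)) : Prop :=
  ∃ G : Set (Finset V),
    I = Ideal.span ((fun σ : Finset V => ∏ v ∈ σ, (X v : MvPolynomial V k)) '' G)

/-- The variable `w` appears in some minimal monomial generator of the squarefree monomial
ideal `J`. -/
def VarAppears {k : Type*} [Field k] {W : Type*} (J : Ideal (MvPolynomial W k)) (w : W) :
    Prop :=
  ∃ σ : Finset W, w ∈ σ ∧ (∏ v ∈ σ, (X v : MvPolynomial W k)) ∈ J ∧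
    ∀ τ : Finset W, τ ⊂ σ → (∏ v ∈ τ, (X v : MvPolynomial W k)) ∉ J

/-- The edge ideal of a graph `G` on the vertex set `[n]`. -/
noncomputable def edgeIdeal (k : Type*) [Field k] {n : ℕ} (G : SimpleGraph (Fin n)) :
    Ideal (MvPolynomial (Fin n) k) :=
  Ideal.span {m | ∃ u v : Fin n, G.Adj u v ∧ m = X u * X v}

/-- A polarization of the edge ideal `I_G` splitting only the variable `x_{i₀}` into `x_{i₀}`
and `x_{i₀'}` (the extra variable being indexed by `Sum.inr ()`), with both variables
appearing in some (minimal) generator. -/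
def IsSplitPolarization (k : Type*) [Field k] {n : ℕ} (G : SimpleGraph (Fin n)) (i₀ : Fin n)
    (J : Ideal (MvPolynomial (Fin n ⊕ Unit) k)) : Prop :=
  IsSqFreeMonomialIdeal J ∧
  (∀ f : MvPolynomial (Fin n ⊕ Unit) k,
    (X (Sum.inl i₀) - X (Sum.inr ())) * f ∈ J → f ∈ J) ∧
  Ideal.map (MvPolynomial.rename (Sum.elim id fun _ => i₀) :
      MvPolynomial (Fin n ⊕ Unit) k →ₐ[k] MvPolynomial (Fin n) k) J = edgeIdeal k G ∧
  VarAppears J (Sum.inl i₀) ∧ VarAppears J (Sum.inr ())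

namespace SPAux



variable {k : Type*} [Field k] {W U : Type*}

/-- exponent vector of a product of variables. -/
noncomputable def expOf [DecidableEq U] (g : W → U) (σ : Finset W) : U →₀ ℕ :=
  ∑ v ∈ σ, Finsupp.single (g v) 1

lemma prod_X_eq [DecidableEq U] (g : W → U) (σ : Finset W) :
    (∏ v ∈ σ, (X (g v) : MvPolynomial U k)) = monomial (expOf g σ) 1 := by
  classical
  induction σ using Finset.induction with
  | empty => simp [expOf]
  | @insert a s ha ih =>
      rw [Finset.prod_insert ha, ih]
      rw [show expOf g (insert a s) = Finsupp.single (g a) 1 + expOf g s from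
        Finset.sum_insert ha, X, monomial_mul, one_mul]

lemma expOf_apply [DecidableEq U] (g : W → U) (σ : Finset W) (u : U) :
    expOf g σ u = (σ.filter fun v => g v = u).card := by
  classical
  rw [expOf, Finset.sum_apply', Finset.card_filter]
  exact Finset.sum_congr rfl fun v _ => by rw [Finsupp.single_apply]

variable [DecidableEq W]

noncomputable def eF (σ : Finset W) : W →₀ ℕ := expOf id σ

lemma eF_apply (σ : Finset W) (w : W) : eF σ w = if w ∈ σ then 1 else 0 := by
  classical
  rw [eF, expOf_apply]
  by_cases h : w ∈ σ
  · rw [if_pos h]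
    have : σ.filter (fun v => id v = w) = {w} := by
      ext v; simp [Finset.mem_filter]; rintro rfl; exact h
    rw [this, Finset.card_singleton]
  · rw [if_neg h]
    have : σ.filter (fun v => id v = w) = ∅ := by
      ext v; simp [Finset.mem_filter]; rintro hv rfl; exact h hv
    rw [this, Finset.card_empty]

lemma eF_le_iff (σ : Finset W) (d : W →₀ ℕ) : eF σ ≤ d ↔ ∀ w ∈ σ, 1 ≤ d w := by
  rw [Finsupp.le_def]
  constructor
  · intro h w hw
    have := h w
    rwa [eF_apply, if_pos hw] at this
  · intro h w
    rw [eF_apply]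
    by_cases hw : w ∈ σ
    · rw [if_pos hw]; exact h w hw
    · simp [hw]

lemma eF_le_eF_iff (σ τ : Finset W) : eF σ ≤ eF τ ↔ σ ⊆ τ := by
  rw [eF_le_iff]
  constructor
  · intro h w hw
    have := h w hw
    rw [eF_apply] at this
    by_contra hc
    simp [hc] at this
  · intro h w hw
    rw [eF_apply, if_pos (h hw)]

lemma mem_span_mon_iff (S : Set (Finset W)) (p : MvPolynomial W k) :
    p ∈ Ideal.span ((fun σ : Finset W => ∏ v ∈ σ, (X v : MvPolynomial W k)) '' S) ↔
      ∀ d ∈ p.support, ∃ σ ∈ S, eF σ ≤ d := by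
  have himg : ((fun σ : Finset W => ∏ v ∈ σ, (X v : MvPolynomial W k)) '' S)
      = (fun d => monomial d (1 : k)) '' (eF '' S) := by
    rw [Set.image_image]
    exact Set.image_congr fun σ _ => prod_X_eq id σ
  rw [himg, mem_ideal_span_monomial_image]
  constructor
  · intro h d hd
    obtain ⟨e, ⟨σ, hσ, rfl⟩, hle⟩ := h d hd
    exact ⟨σ, hσ, hle⟩
  · intro h d hd
    obtain ⟨σ, hσ, hle⟩ := h d hd
    exact ⟨eF σ, ⟨σ, hσ, rfl⟩, hle⟩

lemma mon_mem_span_iff (S : Set (Finset W)) (d : W →₀ ℕ) :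
    (monomial d (1 : k)) ∈ Ideal.span ((fun σ : Finset W => ∏ v ∈ σ, (X v : MvPolynomial W k)) '' S) ↔
      ∃ σ ∈ S, eF σ ≤ d := by
  classical
  rw [mem_span_mon_iff, support_monomial, if_neg (one_ne_zero' k)]
  simp

lemma prod_mem_of_subset (J : Ideal (MvPolynomial W k)) {σ τ : Finset W} (h : σ ⊆ τ)
    (hm : (∏ v ∈ σ, (X v : MvPolynomial W k)) ∈ J) : (∏ v ∈ τ, (X v : MvPolynomial W k)) ∈ J := by
  rw [← Finset.prod_sdiff h]
  exact Ideal.mul_mem_left _ _ hm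


variable {k : Type*} [Field k] {W U : Type*}
section Graph

variable {n : ℕ} (kk : Type*) [Field kk] (G : SimpleGraph (Fin n)) [DecidableRel G.Adj] (i₀ : Fin n)

local notation "V'" => (Fin n ⊕ Unit)

noncomputable abbrev ρfun : (Fin n ⊕ Unit) → Fin n := Sum.elim id fun _ => i₀

lemma edgeIdeal_eq :
    edgeIdeal kk G = Ideal.span ((fun σ : Finset (Fin n) => ∏ v ∈ σ, (X v : MvPolynomial (Fin n) kk)) ''
      {σ | ∃ u v : Fin n, G.Adj u v ∧ σ = {u, v}}) := by
  unfold edgeIdeal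
  congr 1
  ext m
  constructor
  · rintro ⟨u, v, huv, rfl⟩
    refine ⟨{u, v}, ⟨u, v, huv, rfl⟩, ?_⟩
    exact Finset.prod_pair huv.ne
  · rintro ⟨σ, ⟨u, v, huv, rfl⟩, rfl⟩
    refine ⟨u, v, huv, ?_⟩
    show (∏ w ∈ {u, v}, (X w : MvPolynomial (Fin n) kk)) = X u * X v
    exact Finset.prod_pair huv.ne

lemma mon_mem_edgeIdeal_iff (d : Fin n →₀ ℕ) :
    (monomial d (1 : kk)) ∈ edgeIdeal kk G ↔
      ∃ u v : Fin n, G.Adj u v ∧ 1 ≤ d u ∧ 1 ≤ d v := by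
  rw [edgeIdeal_eq, mon_mem_span_iff]
  constructor
  · rintro ⟨σ, ⟨u, v, huv, rfl⟩, hle⟩
    rw [eF_le_iff] at hle
    exact ⟨u, v, huv, hle u (by simp), hle v (by simp)⟩
  · rintro ⟨u, v, huv, h1, h2⟩
    refine ⟨{u, v}, ⟨u, v, huv, rfl⟩, ?_⟩
    rw [eF_le_iff]
    intro w hw
    rcases Finset.mem_insert.mp hw with rfl | hw
    · exact h1
    · rw [Finset.mem_singleton.mp hw]; exact h2

lemma XX_mem_edgeIdeal_iff {a b : Fin n} (hab : a ≠ b) :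
    (X a * X b : MvPolynomial (Fin n) kk) ∈ edgeIdeal kk G ↔ G.Adj a b := by
  classical
  have hXX : (X a * X b : MvPolynomial (Fin n) kk) = monomial (eF {a, b}) 1 := by
    rw [← Finset.prod_pair hab, prod_X_eq]; rfl
  rw [hXX, mon_mem_edgeIdeal_iff]
  constructor
  · rintro ⟨u, v, huv, h1, h2⟩
    rw [eF_apply] at h1 h2
    have hu : u ∈ ({a, b} : Finset (Fin n)) := by by_contra h; simp [h] at h1
    have hv : v ∈ ({a, b} : Finset (Fin n)) := by by_contra h; simp [h] at h2
    simp only [Finset.mem_insert, Finset.mem_singleton] at hu hv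
    rcases hu with rfl | rfl <;> rcases hv with rfl | rfl
    · exact absurd rfl huv.ne
    · exact huv
    · exact huv.symm
    · exact absurd rfl huv.ne
  · intro h
    exact ⟨a, b, h, by rw [eF_apply]; simp, by rw [eF_apply]; simp⟩

/-- kernel of the identification map. -/
lemma rename_ker {p : MvPolynomial (Fin n ⊕ Unit) kk} (hp : rename (ρfun i₀) p = 0) :
    p ∈ Ideal.span {(X (Sum.inl i₀) - X (Sum.inr ()) : MvPolynomial (Fin n ⊕ Unit) kk)} := by
  set I : Ideal (MvPolynomial (Fin n ⊕ Unit) kk) :=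
    Ideal.span {(X (Sum.inl i₀) - X (Sum.inr ()) : MvPolynomial (Fin n ⊕ Unit) kk)} with hI
  have key : (Ideal.Quotient.mkₐ kk I).comp
      (rename (Sum.inl ∘ (ρfun i₀) : (Fin n ⊕ Unit) → (Fin n ⊕ Unit)))
      = Ideal.Quotient.mkₐ kk I := by
    apply MvPolynomial.algHom_ext
    intro w
    cases w with
    | inl v => simp
    | inr u =>
        cases u
        simp only [AlgHom.coe_comp, Function.comp_apply, rename_X, Ideal.Quotient.mkₐ_eq_mk]
        rw [Ideal.Quotient.mk_eq_mk_iff_sub_mem]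
        exact Ideal.subset_span rfl
  have h2 : Ideal.Quotient.mkₐ kk I p
      = Ideal.Quotient.mkₐ kk I (rename (Sum.inl ∘ (ρfun i₀)) p) :=
    (DFunLike.congr_fun key p).symm
  rw [← rename_rename, hp, map_zero, map_zero] at h2
  rw [Ideal.Quotient.mkₐ_eq_mk] at h2
  exact (Ideal.Quotient.eq_zero_iff_mem).mp h2

end Graph
section Graph2
variable {n : ℕ} (kk : Type*) [Field kk] (G : SimpleGraph (Fin n)) [DecidableRel G.Adj] (i₀ : Fin n)

lemma rho_surj : Function.Surjective (ρfun i₀) := fun u => ⟨Sum.inl u, rfl⟩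

/-- decomposition of preimages of the edge ideal. -/
lemma exists_decomp (J : Ideal (MvPolynomial (Fin n ⊕ Unit) kk))
    (hmap : Ideal.map (MvPolynomial.rename (Sum.elim id fun _ => i₀) :
      MvPolynomial (Fin n ⊕ Unit) kk →ₐ[kk] MvPolynomial (Fin n) kk) J = edgeIdeal kk G)
    (p : MvPolynomial (Fin n ⊕ Unit) kk)
    (hp : rename (ρfun i₀) p ∈ edgeIdeal kk G) :
    ∃ j ∈ J, ∃ q, p = j + (X (Sum.inl i₀) - X (Sum.inr ())) * q := by
  rw [← hmap] at hp
  have hsurj : Function.Surjective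
      (MvPolynomial.rename (Sum.elim id fun _ => i₀) :
        MvPolynomial (Fin n ⊕ Unit) kk →ₐ[kk] MvPolynomial (Fin n) kk) :=
    by
      intro q
      refine ⟨rename Sum.inl q, ?_⟩
      show rename (ρfun i₀) (rename Sum.inl q) = q
      rw [rename_rename]
      have : (ρfun i₀ ∘ Sum.inl : Fin n → Fin n) = id := rfl
      rw [this, rename_id, AlgHom.id_apply]
  obtain ⟨j, hjJ, hπj⟩ := (Ideal.mem_map_iff_of_surjective _ hsurj).mp hp
  have h0 : rename (ρfun i₀) (p - j) = 0 := by
    rw [map_sub]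
    change rename (ρfun i₀) p - rename (Sum.elim id fun _ => i₀) j = 0
    rw [hπj, sub_self]
  have hk := rename_ker kk i₀ h0
  rw [Ideal.mem_span_singleton] at hk
  obtain ⟨q, hq⟩ := hk
  exact ⟨j, hjJ, q, by rw [← hq]; ring⟩

/-- the kill map sending the two split variables to zero. -/
noncomputable def killMap : MvPolynomial (Fin n ⊕ Unit) kk →ₐ[kk] MvPolynomial (Fin n ⊕ Unit) kk :=
  aeval (fun w : Fin n ⊕ Unit =>
    if w = Sum.inl i₀ ∨ w = Sum.inr () then 0 else (X w : MvPolynomial (Fin n ⊕ Unit) kk))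

lemma killMap_prod_self {τ : Finset (Fin n ⊕ Unit)} (h1 : Sum.inl i₀ ∉ τ) (h2 : Sum.inr () ∉ τ) :
    killMap kk i₀ (∏ v ∈ τ, (X v : MvPolynomial (Fin n ⊕ Unit) kk)) = ∏ v ∈ τ, X v := by
  rw [map_prod]
  refine Finset.prod_congr rfl fun v hv => ?_
  rw [killMap, aeval_X, if_neg]
  rintro (rfl | rfl)
  · exact h1 hv
  · exact h2 hv

lemma killMap_mem {S : Set (Finset (Fin n ⊕ Unit))}
    {J : Ideal (MvPolynomial (Fin n ⊕ Unit) kk)}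
    (hS : J = Ideal.span ((fun σ : Finset (Fin n ⊕ Unit) =>
      ∏ v ∈ σ, (X v : MvPolynomial (Fin n ⊕ Unit) kk)) '' S))
    {p : MvPolynomial (Fin n ⊕ Unit) kk} (hp : p ∈ J) : killMap kk i₀ p ∈ J := by
  have : J ≤ Ideal.comap (killMap kk i₀) J := by
    conv_lhs => rw [hS]
    rw [Ideal.span_le]
    rintro _ ⟨σ, hσ, rfl⟩
    simp only [SetLike.mem_coe, Ideal.mem_comap]
    by_cases h : Sum.inl i₀ ∈ σ ∨ Sum.inr () ∈ σ
    · rcases h with h | h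
      · have : killMap kk i₀ (∏ v ∈ σ, (X v : MvPolynomial (Fin n ⊕ Unit) kk)) = 0 := by
          rw [map_prod]
          refine Finset.prod_eq_zero h ?_
          rw [killMap, aeval_X, if_pos (Or.inl rfl)]
        rw [this]; exact J.zero_mem
      · have : killMap kk i₀ (∏ v ∈ σ, (X v : MvPolynomial (Fin n ⊕ Unit) kk)) = 0 := by
          rw [map_prod]
          refine Finset.prod_eq_zero h ?_
          rw [killMap, aeval_X, if_pos (Or.inr rfl)]
        rw [this]; exact J.zero_mem
    · push_neg at h
      rw [killMap_prod_self kk i₀ h.1 h.2]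
      rw [hS]
      exact Ideal.subset_span ⟨σ, hσ, rfl⟩
  exact this hp

/-- KEY: a squarefree monomial avoiding both split variables whose image lies in the edge
ideal is in `J`. -/
lemma avoid_mem {S : Set (Finset (Fin n ⊕ Unit))}
    {J : Ideal (MvPolynomial (Fin n ⊕ Unit) kk)}
    (hS : J = Ideal.span ((fun σ : Finset (Fin n ⊕ Unit) =>
      ∏ v ∈ σ, (X v : MvPolynomial (Fin n ⊕ Unit) kk)) '' S))
    (hmap : Ideal.map (MvPolynomial.rename (Sum.elim id fun _ => i₀) :
      MvPolynomial (Fin n ⊕ Unit) kk →ₐ[kk] MvPolynomial (Fin n) kk) J = edgeIdeal kk G)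
    {τ : Finset (Fin n ⊕ Unit)} (hy : Sum.inl i₀ ∉ τ) (hz : Sum.inr () ∉ τ)
    (h : rename (ρfun i₀) (∏ v ∈ τ, (X v : MvPolynomial (Fin n ⊕ Unit) kk)) ∈ edgeIdeal kk G) :
    (∏ v ∈ τ, (X v : MvPolynomial (Fin n ⊕ Unit) kk)) ∈ J := by
  obtain ⟨j, hjJ, q, hq⟩ := exists_decomp kk G i₀ J hmap _ h
  have hφ := congrArg (killMap kk i₀) hq
  rw [killMap_prod_self kk i₀ hy hz, map_add, map_mul, map_sub] at hφ
  rw [show killMap kk i₀ (X (Sum.inl i₀)) = 0 from by rw [killMap, aeval_X, if_pos (Or.inl rfl)],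
    show killMap kk i₀ (X (Sum.inr ())) = 0 from by rw [killMap, aeval_X, if_pos (Or.inr rfl)],
    sub_zero] at hφ
  rw [hφ]
  exact J.add_mem (killMap_mem kk i₀ hS hjJ) (by rw [zero_mul]; exact J.zero_mem)

end Graph2
section Graph3
variable {n : ℕ} (kk : Type*) [Field kk] (G : SimpleGraph (Fin n)) [DecidableRel G.Adj] (i₀ : Fin n)

lemma star_mem {J : Ideal (MvPolynomial (Fin n ⊕ Unit) kk)}
    (hNZD : ∀ f : MvPolynomial (Fin n ⊕ Unit) kk,
      (X (Sum.inl i₀) - X (Sum.inr ())) * f ∈ J → f ∈ J)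
    {p : MvPolynomial (Fin n ⊕ Unit) kk}
    (h1 : X (Sum.inl i₀) * p ∈ J) (h2 : X (Sum.inr ()) * p ∈ J) : p ∈ J :=
  hNZD p (by rw [sub_mul]; exact J.sub_mem h1 h2)

lemma rename_prod {W U : Type*} [DecidableEq U] (g : W → U) (σ : Finset W) :
    rename g (∏ v ∈ σ, (X v : MvPolynomial W kk)) = monomial (expOf g σ) 1 := by
  rw [map_prod, ← prod_X_eq g σ]
  exact Finset.prod_congr rfl fun v _ => rename_X g v

lemma one_le_expOf {W U : Type*} [DecidableEq U] (g : W → U) {σ : Finset W} {w : W}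
    (hw : w ∈ σ) : 1 ≤ expOf g σ (g w) := by
  rw [expOf_apply, Nat.succ_le_iff, Finset.card_pos]
  exact ⟨w, Finset.mem_filter.mpr ⟨hw, rfl⟩⟩

lemma mon_mem_map_iff {S : Set (Finset (Fin n ⊕ Unit))}
    {J : Ideal (MvPolynomial (Fin n ⊕ Unit) kk)}
    (hS : J = Ideal.span ((fun σ : Finset (Fin n ⊕ Unit) =>
      ∏ v ∈ σ, (X v : MvPolynomial (Fin n ⊕ Unit) kk)) '' S)) (d : Fin n →₀ ℕ) :
    (monomial d (1 : kk)) ∈ Ideal.map (MvPolynomial.rename (Sum.elim id fun _ => i₀) :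
      MvPolynomial (Fin n ⊕ Unit) kk →ₐ[kk] MvPolynomial (Fin n) kk) J ↔
      ∃ σ ∈ S, expOf (ρfun i₀) σ ≤ d := by
  classical
  rw [hS, Ideal.map_span]
  have himg : ((MvPolynomial.rename (Sum.elim id fun _ => i₀) :
      MvPolynomial (Fin n ⊕ Unit) kk →ₐ[kk] MvPolynomial (Fin n) kk) ''
        ((fun σ : Finset (Fin n ⊕ Unit) =>
          ∏ v ∈ σ, (X v : MvPolynomial (Fin n ⊕ Unit) kk)) '' S))
      = (fun e => monomial e (1 : kk)) '' (expOf (ρfun i₀) '' S) := by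
    rw [Set.image_image, Set.image_image]
    exact Set.image_congr fun σ _ => rename_prod kk (ρfun i₀) σ
  rw [himg, mem_ideal_span_monomial_image, support_monomial, if_neg (one_ne_zero' kk)]
  constructor
  · intro h
    obtain ⟨e, ⟨σ, hσ, rfl⟩, hle⟩ := h d (Finset.mem_singleton_self d)
    exact ⟨σ, hσ, hle⟩
  · rintro ⟨σ, hσ, hle⟩ e he
    rw [Finset.mem_singleton] at he
    exact ⟨expOf (ρfun i₀) σ, ⟨σ, hσ, rfl⟩, he ▸ hle⟩

lemma neighbor_gen {S : Set (Finset (Fin n ⊕ Unit))}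
    {J : Ideal (MvPolynomial (Fin n ⊕ Unit) kk)}
    (hS : J = Ideal.span ((fun σ : Finset (Fin n ⊕ Unit) =>
      ∏ v ∈ σ, (X v : MvPolynomial (Fin n ⊕ Unit) kk)) '' S))
    (hmap : Ideal.map (MvPolynomial.rename (Sum.elim id fun _ => i₀) :
      MvPolynomial (Fin n ⊕ Unit) kk →ₐ[kk] MvPolynomial (Fin n) kk) J = edgeIdeal kk G)
    {c : Fin n} (hc : G.Adj i₀ c) :
    X (Sum.inl i₀) * X (Sum.inl c) ∈ J ∨ X (Sum.inr ()) * X (Sum.inl c) ∈ J := by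
  classical
  have hne : i₀ ≠ c := hc.ne
  have hmem : (monomial (eF {i₀, c}) (1 : kk)) ∈ Ideal.map
      (MvPolynomial.rename (Sum.elim id fun _ => i₀) :
        MvPolynomial (Fin n ⊕ Unit) kk →ₐ[kk] MvPolynomial (Fin n) kk) J := by
    rw [hmap, mon_mem_edgeIdeal_iff]
    exact ⟨i₀, c, hc, by rw [eF_apply]; simp, by rw [eF_apply]; simp⟩
  rw [mon_mem_map_iff kk i₀ hS] at hmem
  obtain ⟨σ, hσS, hle⟩ := hmem
  rw [Finsupp.le_def] at hle
  have hσJ : (∏ v ∈ σ, (X v : MvPolynomial (Fin n ⊕ Unit) kk)) ∈ J := by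
    rw [hS]; exact Ideal.subset_span ⟨σ, hσS, rfl⟩
  have hsub : ∀ w ∈ σ, w = Sum.inl i₀ ∨ w = Sum.inr () ∨ w = Sum.inl c := by
    intro w hw
    have h1 : 1 ≤ eF {i₀, c} (ρfun i₀ w) := le_trans (one_le_expOf _ hw) (hle _)
    rw [eF_apply] at h1
    have hmem2 : ρfun i₀ w ∈ ({i₀, c} : Finset (Fin n)) := by
      by_contra hcon; simp [hcon] at h1
    cases w with
    | inl v =>
        have hv : v = i₀ ∨ v = c := by
          have hrv : ρfun i₀ (Sum.inl v) = v := rfl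
          rw [hrv] at hmem2
          simpa using hmem2
        rcases hv with rfl | rfl
        · exact Or.inl rfl
        · exact Or.inr (Or.inr rfl)
    | inr u => cases u; exact Or.inr (Or.inl rfl)
  have hnotboth : ¬ (Sum.inl i₀ ∈ σ ∧ Sum.inr () ∈ σ) := by
    rintro ⟨hy, hz⟩
    have h2 : ({Sum.inl i₀, Sum.inr ()} : Finset (Fin n ⊕ Unit)) ⊆
        σ.filter (fun v => ρfun i₀ v = i₀) := by
      intro w hw
      rcases Finset.mem_insert.mp hw with rfl | hw
      · exact Finset.mem_filter.mpr ⟨hy, rfl⟩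
      · rw [Finset.mem_singleton] at hw
        subst hw
        exact Finset.mem_filter.mpr ⟨hz, rfl⟩
    have hcard : 2 ≤ expOf (ρfun i₀) σ i₀ := by
      rw [expOf_apply]
      calc 2 = ({Sum.inl i₀, Sum.inr ()} : Finset (Fin n ⊕ Unit)).card := by
              rw [Finset.card_insert_of_notMem (by simp), Finset.card_singleton]
        _ ≤ _ := Finset.card_le_card h2
    have := le_trans hcard (hle i₀)
    rw [eF_apply, if_pos (by simp)] at this
    omega
  by_cases hzσ : Sum.inr () ∈ σ
  · right
    have hyσ : Sum.inl i₀ ∉ σ := fun h => hnotboth ⟨h, hzσ⟩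
    have hτ : σ ⊆ {Sum.inr (), Sum.inl c} := by
      intro w hw
      rcases hsub w hw with rfl | rfl | rfl
      · exact absurd hw hyσ
      · simp
      · simp
    have := prod_mem_of_subset J hτ hσJ
    rwa [Finset.prod_pair (by simp)] at this
  · left
    have hτ : σ ⊆ {Sum.inl i₀, Sum.inl c} := by
      intro w hw
      rcases hsub w hw with rfl | rfl | rfl
      · simp
      · exact absurd hw hzσ
      · simp
    have := prod_mem_of_subset J hτ hσJ
    rwa [Finset.prod_pair (by simp [hne])] at this

end Graph3
section Graph4
variable {n : ℕ} (kk : Type*) [Field kk] (G : SimpleGraph (Fin n)) [DecidableRel G.Adj] (i₀ : Fin n)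

lemma inl_mem_of_one_le {σ : Finset (Fin n ⊕ Unit)} {u : Fin n} (hu : u ≠ i₀)
    (h : 1 ≤ expOf (ρfun i₀) σ u) : Sum.inl u ∈ σ := by
  classical
  rw [expOf_apply, Nat.succ_le_iff, Finset.card_pos] at h
  obtain ⟨w, hw⟩ := h
  rw [Finset.mem_filter] at hw
  obtain ⟨hwσ, hρ⟩ := hw
  cases w with
  | inl v =>
      have : v = u := hρ
      subst this; exact hwσ
  | inr v =>
      exact absurd hρ.symm hu

lemma min_gen_neighbor {S : Set (Finset (Fin n ⊕ Unit))}
    {J : Ideal (MvPolynomial (Fin n ⊕ Unit) kk)}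
    (hS : J = Ideal.span ((fun σ : Finset (Fin n ⊕ Unit) =>
      ∏ v ∈ σ, (X v : MvPolynomial (Fin n ⊕ Unit) kk)) '' S))
    (hmap : Ideal.map (MvPolynomial.rename (Sum.elim id fun _ => i₀) :
      MvPolynomial (Fin n ⊕ Unit) kk →ₐ[kk] MvPolynomial (Fin n) kk) J = edgeIdeal kk G)
    {w₀ : Fin n ⊕ Unit} (hw₀ : w₀ = Sum.inl i₀ ∨ w₀ = Sum.inr ())
    {σ : Finset (Fin n ⊕ Unit)} (hw₀σ : w₀ ∈ σ)
    (hmon : (∏ v ∈ σ, (X v : MvPolynomial (Fin n ⊕ Unit) kk)) ∈ J)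
    (hmin : ∀ τ : Finset (Fin n ⊕ Unit), τ ⊂ σ →
      (∏ v ∈ τ, (X v : MvPolynomial (Fin n ⊕ Unit) kk)) ∉ J) :
    ∃ v : Fin n, G.Adj i₀ v ∧ Sum.inl v ∈ σ := by
  classical
  have hedge : (monomial (expOf (ρfun i₀) σ) (1 : kk)) ∈ edgeIdeal kk G := by
    rw [← rename_prod kk (ρfun i₀) σ, ← hmap]
    exact Ideal.mem_map_of_mem _ hmon
  rw [mon_mem_edgeIdeal_iff] at hedge
  obtain ⟨u, v, huv, h1, h2⟩ := hedge
  by_cases hui : u = i₀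
  · rw [hui] at huv
    exact ⟨v, huv, inl_mem_of_one_le i₀ huv.ne' h2⟩
  · by_cases hvi : v = i₀
    · rw [hvi] at huv
      exact ⟨u, huv.symm, inl_mem_of_one_le i₀ hui h1⟩
    · exfalso
      have huσ : Sum.inl u ∈ σ := inl_mem_of_one_le i₀ hui h1
      have hvσ : Sum.inl v ∈ σ := inl_mem_of_one_le i₀ hvi h2
      set τ : Finset (Fin n ⊕ Unit) := {Sum.inl u, Sum.inl v} with hτ
      have hw₀τ : w₀ ∉ τ := by
        rcases hw₀ with rfl | rfl
        · simp [hτ, Ne.symm hui, Ne.symm hvi]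
        · simp [hτ]
      have hsub : τ ⊂ σ := by
        rw [Finset.ssubset_def]
        constructor
        · intro w hw
          rcases Finset.mem_insert.mp hw with rfl | hw
          · exact huσ
          · rw [Finset.mem_singleton] at hw; subst hw; exact hvσ
        · intro hcon
          exact hw₀τ (hcon hw₀σ)
      refine hmin τ hsub ?_
      refine avoid_mem kk G i₀ hS hmap ?_ ?_ ?_
      · rcases hw₀ with rfl | h
        · exact hw₀τ
        · simp [hτ, Ne.symm hui, Ne.symm hvi]
      · simp [hτ]
      · rw [Finset.prod_pair (by simp [huv.ne] : (Sum.inl u : Fin n ⊕ Unit) ≠ Sum.inl v)]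
        rw [map_mul, rename_X, rename_X]
        exact Ideal.subset_span ⟨u, v, huv, rfl⟩

lemma exists_A {S : Set (Finset (Fin n ⊕ Unit))}
    {J : Ideal (MvPolynomial (Fin n ⊕ Unit) kk)}
    (hS : J = Ideal.span ((fun σ : Finset (Fin n ⊕ Unit) =>
      ∏ v ∈ σ, (X v : MvPolynomial (Fin n ⊕ Unit) kk)) '' S))
    (hmap : Ideal.map (MvPolynomial.rename (Sum.elim id fun _ => i₀) :
      MvPolynomial (Fin n ⊕ Unit) kk →ₐ[kk] MvPolynomial (Fin n) kk) J = edgeIdeal kk G)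
    (hNZD : ∀ f : MvPolynomial (Fin n ⊕ Unit) kk,
      (X (Sum.inl i₀) - X (Sum.inr ())) * f ∈ J → f ∈ J)
    (hy : VarAppears J (Sum.inl i₀)) :
    ∃ a : Fin n, G.Adj i₀ a ∧ X (Sum.inl i₀) * X (Sum.inl a) ∈ J := by
  classical
  obtain ⟨σ, hwσ, hmon, hmin⟩ := hy
  obtain ⟨v, hadj, hvσ⟩ := min_gen_neighbor kk G i₀ hS hmap (Or.inl rfl) hwσ hmon hmin
  by_cases hv : X (Sum.inl i₀) * X (Sum.inl v) ∈ J
  · exact ⟨v, hadj, hv⟩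
  · exfalso
    have hzv : X (Sum.inr ()) * X (Sum.inl v) ∈ J :=
      (neighbor_gen kk G i₀ hS hmap hadj).resolve_left hv
    set τ := σ.erase (Sum.inl i₀) with hτdef
    have hvτ : Sum.inl v ∈ τ :=
      Finset.mem_erase.mpr ⟨by simp [hadj.ne'], hvσ⟩
    have h1 : X (Sum.inl i₀) * ∏ w ∈ τ, (X w : MvPolynomial (Fin n ⊕ Unit) kk) ∈ J := by
      rw [Finset.mul_prod_erase σ _ hwσ]; exact hmon
    have h2 : X (Sum.inr ()) * ∏ w ∈ τ, (X w : MvPolynomial (Fin n ⊕ Unit) kk) ∈ J := by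
      rw [← Finset.mul_prod_erase τ _ hvτ,
        show (X (Sum.inr ()) : MvPolynomial (Fin n ⊕ Unit) kk) *
          (X (Sum.inl v) * ∏ w ∈ τ.erase (Sum.inl v), X w)
          = (X (Sum.inr ()) * X (Sum.inl v)) * ∏ w ∈ τ.erase (Sum.inl v), X w from by ring]
      exact Ideal.mul_mem_right _ _ hzv
    exact hmin τ (Finset.erase_ssubset hwσ) (star_mem kk i₀ hNZD h1 h2)

lemma exists_B {S : Set (Finset (Fin n ⊕ Unit))}
    {J : Ideal (MvPolynomial (Fin n ⊕ Unit) kk)}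
    (hS : J = Ideal.span ((fun σ : Finset (Fin n ⊕ Unit) =>
      ∏ v ∈ σ, (X v : MvPolynomial (Fin n ⊕ Unit) kk)) '' S))
    (hmap : Ideal.map (MvPolynomial.rename (Sum.elim id fun _ => i₀) :
      MvPolynomial (Fin n ⊕ Unit) kk →ₐ[kk] MvPolynomial (Fin n) kk) J = edgeIdeal kk G)
    (hNZD : ∀ f : MvPolynomial (Fin n ⊕ Unit) kk,
      (X (Sum.inl i₀) - X (Sum.inr ())) * f ∈ J → f ∈ J)
    (hz : VarAppears J (Sum.inr ())) :
    ∃ b : Fin n, G.Adj i₀ b ∧ X (Sum.inr ()) * X (Sum.inl b) ∈ J ∧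
      X (Sum.inl i₀) * X (Sum.inl b) ∉ J := by
  classical
  obtain ⟨σ, hwσ, hmon, hmin⟩ := hz
  obtain ⟨v, hadj, hvσ⟩ := min_gen_neighbor kk G i₀ hS hmap (Or.inr rfl) hwσ hmon hmin
  by_cases hv : X (Sum.inl i₀) * X (Sum.inl v) ∈ J
  · exfalso
    set τ := σ.erase (Sum.inr ()) with hτdef
    have hvτ : Sum.inl v ∈ τ := Finset.mem_erase.mpr ⟨by simp, hvσ⟩
    have h2 : X (Sum.inr ()) * ∏ w ∈ τ, (X w : MvPolynomial (Fin n ⊕ Unit) kk) ∈ J := by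
      rw [Finset.mul_prod_erase σ _ hwσ]; exact hmon
    have h1 : X (Sum.inl i₀) * ∏ w ∈ τ, (X w : MvPolynomial (Fin n ⊕ Unit) kk) ∈ J := by
      rw [← Finset.mul_prod_erase τ _ hvτ,
        show (X (Sum.inl i₀) : MvPolynomial (Fin n ⊕ Unit) kk) *
          (X (Sum.inl v) * ∏ w ∈ τ.erase (Sum.inl v), X w)
          = (X (Sum.inl i₀) * X (Sum.inl v)) * ∏ w ∈ τ.erase (Sum.inl v), X w from by ring]
      exact Ideal.mul_mem_right _ _ hv
    exact hmin τ (Finset.erase_ssubset hwσ) (star_mem kk i₀ hNZD h1 h2)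
  · exact ⟨v, hadj, (neighbor_gen kk G i₀ hS hmap hadj).resolve_left hv, hv⟩

lemma adj_of_gens {J : Ideal (MvPolynomial (Fin n ⊕ Unit) kk)}
    (hmap : Ideal.map (MvPolynomial.rename (Sum.elim id fun _ => i₀) :
      MvPolynomial (Fin n ⊕ Unit) kk →ₐ[kk] MvPolynomial (Fin n) kk) J = edgeIdeal kk G)
    (hNZD : ∀ f : MvPolynomial (Fin n ⊕ Unit) kk,
      (X (Sum.inl i₀) - X (Sum.inr ())) * f ∈ J → f ∈ J)
    {a b : Fin n} (hab : a ≠ b)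
    (h1 : X (Sum.inl i₀) * X (Sum.inl a) ∈ J) (h2 : X (Sum.inr ()) * X (Sum.inl b) ∈ J) :
    G.Adj a b := by
  have hm : X (Sum.inl a) * X (Sum.inl b) ∈ J := by
    refine star_mem kk i₀ hNZD ?_ ?_
    · rw [show (X (Sum.inl i₀) : MvPolynomial (Fin n ⊕ Unit) kk) *
        (X (Sum.inl a) * X (Sum.inl b)) = (X (Sum.inl i₀) * X (Sum.inl a)) * X (Sum.inl b)
        from by ring]
      exact Ideal.mul_mem_right _ _ h1
    · rw [show (X (Sum.inr ()) : MvPolynomial (Fin n ⊕ Unit) kk) *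
        (X (Sum.inl a) * X (Sum.inl b)) = (X (Sum.inr ()) * X (Sum.inl b)) * X (Sum.inl a)
        from by ring]
      exact Ideal.mul_mem_right _ _ h2
  have hedge : rename (ρfun i₀) (X (Sum.inl a) * X (Sum.inl b)) ∈ edgeIdeal kk G := by
    rw [← hmap]
    exact Ideal.mem_map_of_mem _ hm
  rw [map_mul, rename_X, rename_X] at hedge
  exact (XX_mem_edgeIdeal_iff kk G hab).mp hedge

lemma forward {J : Ideal (MvPolynomial (Fin n ⊕ Unit) kk)}
    (hJ : IsSplitPolarization kk G i₀ J) :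
    ∃ A B : Finset (Fin n), A.Nonempty ∧ B.Nonempty ∧ Disjoint A B ∧
      A ∪ B = G.neighborFinset i₀ ∧ ∀ a ∈ A, ∀ b ∈ B, G.Adj a b := by
  classical
  obtain ⟨⟨S, hS⟩, hNZD, hmap, hy, hz⟩ := hJ
  set N := G.neighborFinset i₀ with hN
  set A := N.filter (fun c => X (Sum.inl i₀) * X (Sum.inl c) ∈ J) with hA
  refine ⟨A, N \ A, ?_, ?_, Finset.sdiff_disjoint.symm,
    Finset.union_sdiff_of_subset (Finset.filter_subset _ _), ?_⟩
  · obtain ⟨a, hadj, hmem⟩ := exists_A kk G i₀ hS hmap hNZD hy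
    exact ⟨a, Finset.mem_filter.mpr ⟨(G.mem_neighborFinset i₀ a).mpr hadj, hmem⟩⟩
  · obtain ⟨b, hadj, hzb, hyb⟩ := exists_B kk G i₀ hS hmap hNZD hz
    exact ⟨b, Finset.mem_sdiff.mpr ⟨(G.mem_neighborFinset i₀ b).mpr hadj,
      fun hbA => hyb (Finset.mem_filter.mp hbA).2⟩⟩
  · intro a haA b hbB
    obtain ⟨haN, hya⟩ := Finset.mem_filter.mp haA
    obtain ⟨hbN, hbnA⟩ := Finset.mem_sdiff.mp hbB
    have hadjb : G.Adj i₀ b := (G.mem_neighborFinset i₀ b).mp hbN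
    have hyb : X (Sum.inl i₀) * X (Sum.inl b) ∉ J :=
      fun h => hbnA (Finset.mem_filter.mpr ⟨hbN, h⟩)
    have hzb := (neighbor_gen kk G i₀ hS hmap hadjb).resolve_left hyb
    have hab : a ≠ b := fun h => hbnA (h ▸ haA)
    exact adj_of_gens kk G i₀ hmap hNZD hab hya hzb

end Graph4
section Explicit
variable {n : ℕ} (kk : Type*) [Field kk] (G : SimpleGraph (Fin n)) [DecidableRel G.Adj] (i₀ : Fin n)
variable (A B : Finset (Fin n))

/-- The generator set, as finsets of variables. -/
def Sgen : Set (Finset (Fin n ⊕ Unit)) :=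
  {σ | (∃ a ∈ A, σ = {Sum.inl i₀, Sum.inl a}) ∨ (∃ b ∈ B, σ = {Sum.inr (), Sum.inl b}) ∨
    (∃ u v : Fin n, G.Adj u v ∧ u ≠ i₀ ∧ v ≠ i₀ ∧ σ = {Sum.inl u, Sum.inl v})}

/-- The generator set as polynomials. -/
def GenSet : Set (MvPolynomial (Fin n ⊕ Unit) kk) :=
  ({m | ∃ a ∈ A, m = X (Sum.inl i₀) * X (Sum.inl a)} ∪
   {m | ∃ b ∈ B, m = X (Sum.inr ()) * X (Sum.inl b)} ∪
   {m | ∃ u v : Fin n, G.Adj u v ∧ u ≠ i₀ ∧ v ≠ i₀ ∧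
      m = X (Sum.inl u) * X (Sum.inl v)})

/-- The dominance predicate expressing membership of a monomial in the explicit ideal. -/
def DomJ (d : (Fin n ⊕ Unit) →₀ ℕ) : Prop :=
  (∃ a ∈ A, 1 ≤ d (Sum.inl i₀) ∧ 1 ≤ d (Sum.inl a)) ∨
  (∃ b ∈ B, 1 ≤ d (Sum.inr ()) ∧ 1 ≤ d (Sum.inl b)) ∨
  (∃ u v : Fin n, G.Adj u v ∧ u ≠ i₀ ∧ v ≠ i₀ ∧ 1 ≤ d (Sum.inl u) ∧ 1 ≤ d (Sum.inl v))

variable {A B G i₀}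

lemma neA (hAB : A ∪ B = G.neighborFinset i₀) {a : Fin n} (ha : a ∈ A) : a ≠ i₀ :=
  ((G.mem_neighborFinset i₀ a).mp (hAB ▸ Finset.mem_union_left B ha)).ne'

lemma neB (hAB : A ∪ B = G.neighborFinset i₀) {b : Fin n} (hb : b ∈ B) : b ≠ i₀ :=
  ((G.mem_neighborFinset i₀ b).mp (hAB ▸ Finset.mem_union_right A hb)).ne'

lemma adjA (hAB : A ∪ B = G.neighborFinset i₀) {a : Fin n} (ha : a ∈ A) : G.Adj i₀ a :=
  (G.mem_neighborFinset i₀ a).mp (hAB ▸ Finset.mem_union_left B ha)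

lemma adjB (hAB : A ∪ B = G.neighborFinset i₀) {b : Fin n} (hb : b ∈ B) : G.Adj i₀ b :=
  (G.mem_neighborFinset i₀ b).mp (hAB ▸ Finset.mem_union_right A hb)

lemma genSet_eq (hAB : A ∪ B = G.neighborFinset i₀) :
    GenSet kk G i₀ A B = (fun σ : Finset (Fin n ⊕ Unit) =>
      ∏ v ∈ σ, (X v : MvPolynomial (Fin n ⊕ Unit) kk)) '' Sgen G i₀ A B := by
  ext m
  constructor
  · rintro ((⟨a, ha, rfl⟩ | ⟨b, hb, rfl⟩) | ⟨u, v, huv, hu, hv, rfl⟩)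
    · refine ⟨{Sum.inl i₀, Sum.inl a}, Or.inl ⟨a, ha, rfl⟩, ?_⟩
      exact Finset.prod_pair (by simp [Ne.symm (neA hAB ha)])
    · refine ⟨{Sum.inr (), Sum.inl b}, Or.inr (Or.inl ⟨b, hb, rfl⟩), ?_⟩
      exact Finset.prod_pair (by simp)
    · refine ⟨{Sum.inl u, Sum.inl v}, Or.inr (Or.inr ⟨u, v, huv, hu, hv, rfl⟩), ?_⟩
      exact Finset.prod_pair (by simp [huv.ne])
  · rintro ⟨σ, (⟨a, ha, rfl⟩ | ⟨b, hb, rfl⟩ | ⟨u, v, huv, hu, hv, rfl⟩), rfl⟩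
    · refine Or.inl (Or.inl ⟨a, ha, ?_⟩)
      show (∏ w ∈ ({Sum.inl i₀, Sum.inl a} : Finset (Fin n ⊕ Unit)),
        (X w : MvPolynomial (Fin n ⊕ Unit) kk)) = _
      exact Finset.prod_pair (show (Sum.inl i₀ : Fin n ⊕ Unit) ≠ Sum.inl a by
        simp [Ne.symm (neA hAB ha)])
    · refine Or.inl (Or.inr ⟨b, hb, ?_⟩)
      show (∏ w ∈ ({Sum.inr (), Sum.inl b} : Finset (Fin n ⊕ Unit)),
        (X w : MvPolynomial (Fin n ⊕ Unit) kk)) = _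
      exact Finset.prod_pair (show (Sum.inr () : Fin n ⊕ Unit) ≠ Sum.inl b by simp)
    · refine Or.inr ⟨u, v, huv, hu, hv, ?_⟩
      show (∏ w ∈ ({Sum.inl u, Sum.inl v} : Finset (Fin n ⊕ Unit)),
        (X w : MvPolynomial (Fin n ⊕ Unit) kk)) = _
      exact Finset.prod_pair (show (Sum.inl u : Fin n ⊕ Unit) ≠ Sum.inl v by simp [huv.ne])

lemma domJ_iff (hAB : A ∪ B = G.neighborFinset i₀) (d : (Fin n ⊕ Unit) →₀ ℕ) :
    (∃ σ ∈ Sgen G i₀ A B, eF σ ≤ d) ↔ DomJ G i₀ A B d := by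
  constructor
  · rintro ⟨σ, (⟨a, ha, rfl⟩ | ⟨b, hb, rfl⟩ | ⟨u, v, huv, hu, hv, rfl⟩), hle⟩ <;>
      rw [eF_le_iff] at hle
    · exact Or.inl ⟨a, ha, hle _ (by simp), hle _ (by simp)⟩
    · exact Or.inr (Or.inl ⟨b, hb, hle _ (by simp), hle _ (by simp)⟩)
    · exact Or.inr (Or.inr ⟨u, v, huv, hu, hv, hle _ (by simp), hle _ (by simp)⟩)
  · rintro (⟨a, ha, h1, h2⟩ | ⟨b, hb, h1, h2⟩ | ⟨u, v, huv, hu, hv, h1, h2⟩)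
    · refine ⟨{Sum.inl i₀, Sum.inl a}, Or.inl ⟨a, ha, rfl⟩, ?_⟩
      rw [eF_le_iff]
      intro w hw
      rcases Finset.mem_insert.mp hw with rfl | hw
      · exact h1
      · rw [Finset.mem_singleton] at hw; subst hw; exact h2
    · refine ⟨{Sum.inr (), Sum.inl b}, Or.inr (Or.inl ⟨b, hb, rfl⟩), ?_⟩
      rw [eF_le_iff]
      intro w hw
      rcases Finset.mem_insert.mp hw with rfl | hw
      · exact h1
      · rw [Finset.mem_singleton] at hw; subst hw; exact h2
    · refine ⟨{Sum.inl u, Sum.inl v}, Or.inr (Or.inr ⟨u, v, huv, hu, hv, rfl⟩), ?_⟩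
      rw [eF_le_iff]
      intro w hw
      rcases Finset.mem_insert.mp hw with rfl | hw
      · exact h1
      · rw [Finset.mem_singleton] at hw; subst hw; exact h2

lemma mem_genIdeal_iff (hAB : A ∪ B = G.neighborFinset i₀)
    (p : MvPolynomial (Fin n ⊕ Unit) kk) :
    p ∈ Ideal.span (GenSet kk G i₀ A B) ↔ ∀ d ∈ p.support, DomJ G i₀ A B d := by
  rw [genSet_eq kk hAB, mem_span_mon_iff]
  exact forall₂_congr fun d _ => domJ_iff hAB d

/-- the image of the explicit ideal is the edge ideal. -/
lemma explicit_map (hAB : A ∪ B = G.neighborFinset i₀) :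
    Ideal.map (MvPolynomial.rename (Sum.elim id fun _ => i₀) :
      MvPolynomial (Fin n ⊕ Unit) kk →ₐ[kk] MvPolynomial (Fin n) kk)
      (Ideal.span (GenSet kk G i₀ A B)) = edgeIdeal kk G := by
  rw [Ideal.map_span]
  apply le_antisymm
  · rw [Ideal.span_le]
    rintro _ ⟨m, ((⟨a, ha, rfl⟩ | ⟨b, hb, rfl⟩) | ⟨u, v, huv, hu, hv, rfl⟩), rfl⟩ <;>
      simp only [map_mul, rename_X, SetLike.mem_coe]
    · exact Ideal.subset_span ⟨i₀, a, adjA hAB ha, rfl⟩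
    · exact Ideal.subset_span ⟨i₀, b, adjB hAB hb, rfl⟩
    · exact Ideal.subset_span ⟨u, v, huv, rfl⟩
  · rw [edgeIdeal, Ideal.span_le]
    rintro _ ⟨u, v, huv, rfl⟩
    by_cases hu : u = i₀
    · subst hu
      have hv : v ∈ A ∪ B := hAB ▸ (G.mem_neighborFinset u v).mpr huv
      rcases Finset.mem_union.mp hv with hv | hv
      · refine Ideal.subset_span ⟨X (Sum.inl u) * X (Sum.inl v),
          Or.inl (Or.inl ⟨v, hv, rfl⟩), ?_⟩
        simp [rename_X]
      · refine Ideal.subset_span ⟨X (Sum.inr ()) * X (Sum.inl v),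
          Or.inl (Or.inr ⟨v, hv, rfl⟩), ?_⟩
        simp [rename_X]
    · by_cases hv : v = i₀
      · subst hv
        have hu2 : u ∈ A ∪ B := hAB ▸ (G.mem_neighborFinset v u).mpr huv.symm
        rcases Finset.mem_union.mp hu2 with hu2 | hu2
        · refine Ideal.subset_span ⟨X (Sum.inl v) * X (Sum.inl u),
            Or.inl (Or.inl ⟨u, hu2, rfl⟩), ?_⟩
          simp [rename_X, mul_comm]
        · refine Ideal.subset_span ⟨X (Sum.inr ()) * X (Sum.inl u),
            Or.inl (Or.inr ⟨u, hu2, rfl⟩), ?_⟩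
          simp [rename_X, mul_comm]
      · refine Ideal.subset_span ⟨X (Sum.inl u) * X (Sum.inl v),
          Or.inr ⟨u, v, huv, hu, hv, rfl⟩, ?_⟩
        simp [rename_X]

end Explicit
section NZD
variable {n : ℕ} (kk : Type*) [Field kk] {G : SimpleGraph (Fin n)} [DecidableRel G.Adj] {i₀ : Fin n}
variable {A B : Finset (Fin n)}

lemma domJ_reduce (hAB : A ∪ B = G.neighborFinset i₀)
    {m d : (Fin n ⊕ Unit) →₀ ℕ} (hd : DomJ G i₀ A B d)
    (hi : ∀ c : Fin n, c ≠ i₀ → d (Sum.inl c) = m (Sum.inl c))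
    (hz' : 1 ≤ d (Sum.inr ()) → 1 ≤ m (Sum.inr ()))
    (hnm : ¬ DomJ G i₀ A B m) :
    m (Sum.inl i₀) = 0 ∧ ∃ a ∈ A, 1 ≤ m (Sum.inl a) := by
  rcases hd with ⟨a, ha, _, h2⟩ | ⟨b, hb, h1, h2⟩ | ⟨u, v, hadj, hu, hv, h1, h2⟩
  · have h2' : 1 ≤ m (Sum.inl a) := hi a (neA hAB ha) ▸ h2
    refine ⟨?_, a, ha, h2'⟩
    by_contra h0
    exact hnm (Or.inl ⟨a, ha, Nat.one_le_iff_ne_zero.mpr h0, h2'⟩)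
  · exact absurd (Or.inr (Or.inl ⟨b, hb, hz' h1, hi b (neB hAB hb) ▸ h2⟩)) hnm
  · exact absurd (Or.inr (Or.inr ⟨u, v, hadj, hu, hv, hi u hu ▸ h1, hi v hv ▸ h2⟩)) hnm

lemma explicit_nzd (hAB : A ∪ B = G.neighborFinset i₀)
    (hcomp : ∀ a ∈ A, ∀ b ∈ B, G.Adj a b)
    (f : MvPolynomial (Fin n ⊕ Unit) kk)
    (hf : (X (Sum.inl i₀) - X (Sum.inr ())) * f ∈ Ideal.span (GenSet kk G i₀ A B)) :
    f ∈ Ideal.span (GenSet kk G i₀ A B) := by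
  classical
  rw [mem_genIdeal_iff kk hAB] at hf ⊢
  by_contra hcon
  push_neg at hcon
  obtain ⟨m0, hm0, hm0J⟩ := hcon
  set T := f.support.filter (fun d => ¬ DomJ G i₀ A B d) with hT
  have hTne : T.Nonempty := ⟨m0, Finset.mem_filter.mpr ⟨hm0, hm0J⟩⟩
  obtain ⟨m, hmT, hmax⟩ := Finset.exists_max_image T (fun d => d (Sum.inl i₀)) hTne
  obtain ⟨hmf, hmJ⟩ := Finset.mem_filter.mp hmT
  have hmne : coeff m f ≠ 0 := MvPolynomial.mem_support_iff.mp hmf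
  set ey : (Fin n ⊕ Unit) →₀ ℕ := Finsupp.single (Sum.inl i₀) 1 with hey
  set ez : (Fin n ⊕ Unit) →₀ ℕ := Finsupp.single (Sum.inr ()) 1 with hez
  -- Step 1
  have key1 : m (Sum.inl i₀) = 0 ∧ ∃ a ∈ A, 1 ≤ m (Sum.inl a) := by
    have hcoeffy : coeff (m + ey) (X (Sum.inl i₀) * f) = coeff m f := by
      rw [add_comm m ey, hey]
      exact coeff_X_mul m (Sum.inl i₀) f
    by_cases hc : coeff (m + ey) ((X (Sum.inl i₀) - X (Sum.inr ())) * f) = 0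
    · rw [sub_mul, coeff_sub, hcoeffy, sub_eq_zero] at hc
      rw [coeff_X_mul'] at hc
      by_cases hzz : Sum.inr () ∈ (m + ey).support
      swap
      · rw [if_neg hzz] at hc; exact absurd hc hmne
      rw [if_pos hzz] at hc
      set m' := (m + ey) - ez with hm'
      have hm'f : m' ∈ f.support := MvPolynomial.mem_support_iff.mpr (fun h => hmne (hc.trans h))
      have hm'y : m' (Sum.inl i₀) = m (Sum.inl i₀) + 1 := by
        rw [hm', Finsupp.tsub_apply, Finsupp.add_apply, hey, hez,
          Finsupp.single_apply, Finsupp.single_apply]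
        simp
      have hm'D : DomJ G i₀ A B m' := by
        by_contra hD
        have := hmax m' (Finset.mem_filter.mpr ⟨hm'f, hD⟩)
        omega
      refine domJ_reduce hAB hm'D ?_ ?_ hmJ
      · intro c hc2
        rw [hm', Finsupp.tsub_apply, Finsupp.add_apply, hey, hez,
          Finsupp.single_apply, Finsupp.single_apply]
        simp [Ne.symm hc2]
      · intro h1
        rw [hm', Finsupp.tsub_apply, Finsupp.add_apply, hey, hez,
          Finsupp.single_apply, Finsupp.single_apply] at h1
        simp only [if_neg (by simp : ¬ (Sum.inl i₀ : Fin n ⊕ Unit) = Sum.inr ()),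
          if_pos rfl, add_zero] at h1
        omega
    · have hD : DomJ G i₀ A B (m + ey) :=
        hf _ (MvPolynomial.mem_support_iff.mpr hc)
      refine domJ_reduce hAB hD ?_ ?_ hmJ
      · intro c hc2
        rw [Finsupp.add_apply, hey, Finsupp.single_apply]
        simp [Ne.symm hc2]
      · intro h1
        rw [Finsupp.add_apply, hey, Finsupp.single_apply] at h1
        simpa using h1
  obtain ⟨hmy0, a, haA, hma⟩ := key1
  -- Step 2
  have hyzero : (m + ez) (Sum.inl i₀) = 0 := by
    rw [Finsupp.add_apply, hez, Finsupp.single_apply]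
    simpa using hmy0
  have hc2 : coeff (m + ez) ((X (Sum.inl i₀) - X (Sum.inr ())) * f) = - coeff m f := by
    rw [sub_mul, coeff_sub]
    have h1 : coeff (m + ez) (X (Sum.inl i₀) * f) = 0 := by
      rw [coeff_X_mul', if_neg]
      rw [Finsupp.mem_support_iff]
      simpa using hyzero
    have h2 : coeff (m + ez) (X (Sum.inr ()) * f) = coeff m f := by
      rw [add_comm m ez, hez]
      exact coeff_X_mul m (Sum.inr ()) f
    rw [h1, h2, zero_sub]
  have hD2 : DomJ G i₀ A B (m + ez) := by
    refine hf _ (MvPolynomial.mem_support_iff.mpr ?_)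
    rw [hc2]
    simpa using hmne
  have hcoord : ∀ c : Fin n, (m + ez) (Sum.inl c) = m (Sum.inl c) := by
    intro c
    rw [Finsupp.add_apply, hez, Finsupp.single_apply]
    simp
  rcases hD2 with ⟨a', _, h1, _⟩ | ⟨b, hb, _, h2⟩ | ⟨u, v, hadj, hu, hv, h1, h2⟩
  · rw [hyzero] at h1; omega
  · have hmb : 1 ≤ m (Sum.inl b) := hcoord b ▸ h2
    exact hmJ (Or.inr (Or.inr ⟨a, b, hcomp a haA b hb, neA hAB haA, neB hAB hb, hma, hmb⟩))
  · exact hmJ (Or.inr (Or.inr ⟨u, v, hadj, hu, hv, hcoord u ▸ h1, hcoord v ▸ h2⟩))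

end NZD
section Assemble
variable {n : ℕ} (kk : Type*) [Field kk] {G : SimpleGraph (Fin n)} [DecidableRel G.Adj] {i₀ : Fin n}
variable {A B : Finset (Fin n)}

lemma mem_of_one_le_eF {W : Type*} [DecidableEq W] {τ : Finset W} {w : W}
    (h : 1 ≤ eF τ w) : w ∈ τ := by
  by_contra hc
  rw [eF_apply, if_neg hc] at h
  omega

lemma two_le_card_of_domJ (hAB : A ∪ B = G.neighborFinset i₀) {τ : Finset (Fin n ⊕ Unit)}
    (h : DomJ G i₀ A B (eF τ)) : 2 ≤ τ.card := by
  have hlt : 1 < τ.card := by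
    refine Finset.one_lt_card.mpr ?_
    rcases h with ⟨a, ha, h1, h2⟩ | ⟨b, hb, h1, h2⟩ | ⟨u, v, hadj, _, _, h1, h2⟩
    · exact ⟨_, mem_of_one_le_eF h1, _, mem_of_one_le_eF h2, by simp [Ne.symm (neA hAB ha)]⟩
    · exact ⟨_, mem_of_one_le_eF h1, _, mem_of_one_le_eF h2, by simp⟩
    · exact ⟨_, mem_of_one_le_eF h1, _, mem_of_one_le_eF h2, by simp [hadj.ne]⟩
  omega

lemma prod_mem_genIdeal_iff (hAB : A ∪ B = G.neighborFinset i₀) (τ : Finset (Fin n ⊕ Unit)) :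
    (∏ v ∈ τ, (X v : MvPolynomial (Fin n ⊕ Unit) kk)) ∈ Ideal.span (GenSet kk G i₀ A B) ↔
      DomJ G i₀ A B (eF τ) := by
  classical
  have hp : (∏ v ∈ τ, (X v : MvPolynomial (Fin n ⊕ Unit) kk)) = monomial (eF τ) 1 := by
    have := prod_X_eq (k := kk) id τ
    simpa [eF] using this
  rw [mem_genIdeal_iff kk hAB, hp, support_monomial, if_neg (one_ne_zero' kk)]
  simp

lemma varAppears_pair (hAB : A ∪ B = G.neighborFinset i₀)
    {w₀ : Fin n ⊕ Unit} {c : Fin n} (hne : w₀ ≠ Sum.inl c)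
    (hgen : X w₀ * X (Sum.inl c) ∈ Ideal.span (GenSet kk G i₀ A B)) :
    VarAppears (Ideal.span (GenSet kk G i₀ A B)) w₀ := by
  classical
  refine ⟨{w₀, Sum.inl c}, by simp, ?_, ?_⟩
  · rw [Finset.prod_pair hne]; exact hgen
  · intro τ hτ hmem
    rw [prod_mem_genIdeal_iff kk hAB] at hmem
    have h2 := two_le_card_of_domJ hAB hmem
    have hlt : τ.card < 2 := by
      have := Finset.card_lt_card hτ
      have hc2 : ({w₀, Sum.inl c} : Finset (Fin n ⊕ Unit)).card = 2 := by
        rw [Finset.card_insert_of_notMem (by simp [hne]), Finset.card_singleton]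
      omega
    omega

lemma part2 (hA : A.Nonempty) (hB : B.Nonempty)
    (hAB : A ∪ B = G.neighborFinset i₀) (hcomp : ∀ a ∈ A, ∀ b ∈ B, G.Adj a b) :
    IsSplitPolarization kk G i₀ (Ideal.span (GenSet kk G i₀ A B)) := by
  refine ⟨⟨Sgen G i₀ A B, by rw [← genSet_eq kk hAB]⟩, explicit_nzd kk hAB hcomp,
    explicit_map kk hAB, ?_, ?_⟩
  · obtain ⟨a, ha⟩ := hA
    refine varAppears_pair kk (c := a) hAB (by simp [Ne.symm (neA hAB ha)]) ?_
    exact Ideal.subset_span (Or.inl (Or.inl ⟨a, ha, rfl⟩))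
  · obtain ⟨b, hb⟩ := hB
    refine varAppears_pair kk (c := b) hAB (by simp) ?_
    exact Ideal.subset_span (Or.inl (Or.inr ⟨b, hb, rfl⟩))

end Assemble
end SPAux

/-- The edge ideal `I_G` admits a polarization splitting the variable
`x_{i₀}` into two variables (each appearing in some generator) if and only if the
neighborhood of `i₀` can be partitioned into two nonempty sets `A`, `B` with every `a ∈ A`
adjacent to every `b ∈ B`; moreover every such bipartition yields the polarization generated
by `x_{i₀} x_a` (`a ∈ A`), `x_{i₀'} x_b` (`b ∈ B`) and `x_u x_v` for the edges `{u,v}` of `G`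
avoiding `i₀`. -/
theorem edge_ideal_split_polarization (k : Type*) [Field k] {n : ℕ}
    (G : SimpleGraph (Fin n)) [DecidableRel G.Adj] (i₀ : Fin n) :
    ((∃ J : Ideal (MvPolynomial (Fin n ⊕ Unit) k), IsSplitPolarization k G i₀ J) ↔
      ∃ A B : Finset (Fin n), A.Nonempty ∧ B.Nonempty ∧ Disjoint A B ∧
        A ∪ B = G.neighborFinset i₀ ∧ ∀ a ∈ A, ∀ b ∈ B, G.Adj a b) ∧
    ∀ A B : Finset (Fin n), A.Nonempty → B.Nonempty → Disjoint A B →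
      A ∪ B = G.neighborFinset i₀ → (∀ a ∈ A, ∀ b ∈ B, G.Adj a b) →
      IsSplitPolarization k G i₀ (Ideal.span
        ({m | ∃ a ∈ A, m = X (Sum.inl i₀) * X (Sum.inl a)} ∪
         {m | ∃ b ∈ B, m = X (Sum.inr ()) * X (Sum.inl b)} ∪
         {m | ∃ u v : Fin n, G.Adj u v ∧ u ≠ i₀ ∧ v ≠ i₀ ∧
            m = X (Sum.inl u) * X (Sum.inl v)})) := by
  constructor
  · constructor
    · rintro ⟨J, hJ⟩
      exact SPAux.forward k G i₀ hJ
    · rintro ⟨A, B, h1, h2, _, h4, h5⟩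
      exact ⟨_, SPAux.part2 k h1 h2 h4 h5⟩
  · intro A B h1 h2 _ h4 h5
    exact SPAux.part2 k h1 h2 h4 h5
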